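/- In the tautology-reduction profile, fix i ∈ {1,…,ℓ} and a candidate a ∉ {x_i, ¬x_i} (so a is x₀ or a literal of another variable). In every completion of the profile, across the m−2 linear orders given by the completion of voter v_i together with the orders of v_i¹,…,v_i^{m−3}, the candidate a occupies each position in {1,…,m} \ {d, d+1} exactly once; consequently these m−2 voters jointly contribute exactly ρ = (Σ_{s=1}^{m} r(s)) − r(d) − r(d+1) to the score of a. -/
import Mathlib


/-- The candidate set `C = {x₀} ∪ {x_i, ¬x_i : 1 ≤ i ≤ ℓ}`:
`none` is the special candidate `x₀`, and `some (i, true)` / `some (i, false)`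
are the literals `x_i` / `¬x_i`.  Thus `|C| = m = 2ℓ+1`. -/
abbrev Cand (ℓ : ℕ) := Option (Fin ℓ × Bool)

/-- The 0-based index of candidate `c` in the fixed enumeration `oth i` of the
`m − 2` candidates other than `x_i, ¬x_i` (the list `c₁,…,c_{m−2}`). -/
noncomputable def othIdx {ℓ : ℕ} (oth : Fin ℓ → Fin (2 * ℓ - 1) → Cand ℓ)
    (i : Fin ℓ) (c : Cand ℓ) : ℕ :=
  if h : ∃ q, oth i q = c then (h.choose : ℕ) else 0

/-- The (1-based) position of candidate `c` in the base linear order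
`c^i = (c₁,…,c_{d−1}, x_i, ¬x_i, c_d,…,c_{m−2})`. -/
noncomputable def viBasePos {ℓ : ℕ} (oth : Fin ℓ → Fin (2 * ℓ - 1) → Cand ℓ)
    (d : ℕ) (i : Fin ℓ) (c : Cand ℓ) : ℕ :=
  if c = some (i, true) then d
  else if c = some (i, false) then d + 1
  else if othIdx oth i c + 1 < d then othIdx oth i c + 1 else othIdx oth i c + 3

/-- The (1-based) position of candidate `c` in the linear order of voter `v_i^j`
(for `j ∈ {1,…,m−3}`): the candidates `c₁,…,c_{m−2}` are shifted cyclically `j`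
positions to the left, `x_i` is at position `d` and `¬x_i` at `d+1` when `j` is odd,
and they are swapped when `j` is even. -/
noncomputable def vijPos {ℓ : ℕ} (oth : Fin ℓ → Fin (2 * ℓ - 1) → Cand ℓ)
    (d : ℕ) (i : Fin ℓ) (j : ℕ) (c : Cand ℓ) : ℕ :=
  if c = some (i, true) then (if j % 2 = 1 then d else d + 1)
  else if c = some (i, false) then (if j % 2 = 1 then d + 1 else d)
  else
    let p := (othIdx oth i c + (2 * ℓ - 1) - j) % (2 * ℓ - 1) + 1
    if p < d then p else p + 2

/-- The (1-based) position of candidate `c` in the linear order of voter `u_j`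
(for `j ∈ {1,…,m−1}`): the literals `(c″₁,…,c″_{m−1}) = (x₁,¬x₁,…,x_ℓ,¬x_ℓ)`
shifted cyclically `j` positions to the left, followed by `x₀` at position `m`. -/
def uPos (ℓ : ℕ) (j : ℕ) (c : Cand ℓ) : ℕ :=
  match c with
  | none => 2 * ℓ + 1
  | some (i, b) => ((2 * (i : ℕ) + (if b then 0 else 1)) + 2 * ℓ - j) % (2 * ℓ) + 1

/-- `pos` is (the position function of) a linear order on the `m = 2ℓ+1` candidates:
it is injective with values in `{1,…,m}`. -/
def IsPosOrder (ℓ : ℕ) (pos : Cand ℓ → ℕ) : Prop :=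
  Function.Injective pos ∧ ∀ c, 1 ≤ pos c ∧ pos c ≤ 2 * ℓ + 1

/-- `Tv` is a completion of the tautology-reduction profile: `Tv i` is a linear order
extending the partial order of voter `v_i`, i.e. the order `c^i` with (only) the
comparison between `x_i` and `¬x_i` deleted.  (The orders of the voters `v_i^j` and
`u_j` are already total, so a completion is determined by the `Tv i`.) -/
def IsProfileCompletion {ℓ : ℕ} (oth : Fin ℓ → Fin (2 * ℓ - 1) → Cand ℓ)
    (d : ℕ) (Tv : Fin ℓ → Cand ℓ → ℕ) : Prop :=
  ∀ i, IsPosOrder ℓ (Tv i) ∧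
    ∀ a b, viBasePos oth d i a < viBasePos oth d i b →
      ¬(a = some (i, true) ∧ b = some (i, false)) → Tv i a < Tv i b

/-- The score `s(T,c)` of candidate `c` in the completion given by `Tv`: the sum over all
`n = ℓ(m−2)+(m−1)` voters (the `v_i`, the `v_i^j` for `j ∈ {1,…,m−3}`, and the `u_j` for
`j ∈ {1,…,m−1}`) of `r` applied to the position of `c`. -/
noncomputable def score {ℓ : ℕ} (r : ℕ → ℕ) (oth : Fin ℓ → Fin (2 * ℓ - 1) → Cand ℓ)
    (d : ℕ) (Tv : Fin ℓ → Cand ℓ → ℕ) (c : Cand ℓ) : ℕ :=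
  (∑ i : Fin ℓ, r (Tv i c)) +
  (∑ i : Fin ℓ, ∑ j ∈ Finset.Icc 1 (2 * ℓ - 2), r (vijPos oth d i j c)) +
  (∑ j ∈ Finset.Icc 1 (2 * ℓ), r (uPos ℓ j c))

/-- The completion `Tv` selects the literal `x_i` (if `b = true`) resp. `¬x_i`
(if `b = false`): the completion of voter `v_i` places it above its negation. -/
def Selects {ℓ : ℕ} (Tv : Fin ℓ → Cand ℓ → ℕ) (i : Fin ℓ) (b : Bool) : Prop :=
  if b then Tv i (some (i, true)) < Tv i (some (i, false))
  else Tv i (some (i, false)) < Tv i (some (i, true))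

/-- `c` is a winner of the completion `Tv`: it has maximum score. -/
noncomputable def IsWinner {ℓ : ℕ} (r : ℕ → ℕ) (oth : Fin ℓ → Fin (2 * ℓ - 1) → Cand ℓ)
    (d : ℕ) (Tv : Fin ℓ → Cand ℓ → ℕ) (c : Cand ℓ) : Prop :=
  ∀ c', score r oth d Tv c' ≤ score r oth d Tv c

/-- The "adjusted position" map: `t ↦ t+1` if that is below `d`, else `t ↦ t+3`. -/
def gfun (d t : ℕ) : ℕ := if t + 1 < d then t + 1 else t + 3

lemma gfun_mono (d : ℕ) : ∀ t t' : ℕ, t < t' → gfun d t < gfun d t' := by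
  intro t t' h; unfold gfun; split_ifs <;> omega

lemma gfun_inj (d : ℕ) : ∀ t t', gfun d t = gfun d t' → t = t' := by
  intro t t' h
  rcases lt_trichotomy t t' with hlt | heq | hgt
  · exact absurd h (Nat.ne_of_lt (gfun_mono d _ _ hlt))
  · exact heq
  · exact absurd h.symm (Nat.ne_of_lt (gfun_mono d _ _ hgt))

lemma gfun_ne (d t : ℕ) : gfun d t ≠ d ∧ gfun d t ≠ d + 1 := by
  unfold gfun; split_ifs <;> omega

/-- `othIdx` really is the index of `c` in the enumeration `oth i`. -/
lemma othIdx_spec {ℓ : ℕ} (hℓ : 1 ≤ ℓ) (oth : Fin ℓ → Fin (2 * ℓ - 1) → Cand ℓ)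
    (hoth_inj : ∀ i, Function.Injective (oth i))
    (hoth_ne : ∀ i q, oth i q ≠ some (i, true) ∧ oth i q ≠ some (i, false))
    (i : Fin ℓ) (c : Cand ℓ) (h1 : c ≠ some (i, true)) (h2 : c ≠ some (i, false)) :
    ∃ q : Fin (2 * ℓ - 1), oth i q = c ∧ (q : ℕ) = othIdx oth i c := by
  have hcard : Fintype.card (Cand ℓ) = 2 * ℓ + 1 := by
    simp only [Fintype.card_option, Fintype.card_prod, Fintype.card_fin, Fintype.card_bool]
    omega
  have hS : (Finset.univ.image (oth i))
      = Finset.univ \ ({some (i, true), some (i, false)} : Finset (Cand ℓ)) := by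
    apply Finset.eq_of_subset_of_card_le
    · intro x hx
      simp only [Finset.mem_image] at hx
      obtain ⟨q, _, rfl⟩ := hx
      simp [Finset.mem_sdiff, (hoth_ne i q).1, (hoth_ne i q).2]
    · have hc1 : (Finset.univ.image (oth i)).card = 2 * ℓ - 1 := by
        rw [Finset.card_image_of_injective _ (hoth_inj i), Finset.card_univ, Fintype.card_fin]
      have hc2 : (Finset.univ \ ({some (i, true), some (i, false)} : Finset (Cand ℓ))).card
          = 2 * ℓ - 1 := by
        rw [Finset.card_sdiff_of_subset (fun x _ => Finset.mem_univ x), Finset.card_univ, hcard]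
        have : ({some (i, true), some (i, false)} : Finset (Cand ℓ)).card = 2 := by
          rw [Finset.card_insert_of_notMem (by simp), Finset.card_singleton]
        omega
      omega
  have hmem : c ∈ Finset.univ.image (oth i) := by
    rw [hS]; simp [h1, h2]
  simp only [Finset.mem_image] at hmem
  obtain ⟨q, _, hq⟩ := hmem
  have hex : ∃ q, oth i q = c := ⟨q, hq⟩
  refine ⟨hex.choose, hex.choose_spec, ?_⟩
  rw [othIdx, dif_pos hex]

/-- Any injective position function with values in `{1,…,2ℓ+1}` sends `a` to
one plus the number of candidates strictly below `a`. -/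
lemma pos_eq_card {ℓ : ℕ} (f : Cand ℓ → ℕ) (hinj : Function.Injective f)
    (hb : ∀ c, 1 ≤ f c ∧ f c ≤ 2 * ℓ + 1) (a : Cand ℓ) :
    f a = (Finset.univ.filter (fun b => f b < f a)).card + 1 := by
  have hcard : Fintype.card (Cand ℓ) = 2 * ℓ + 1 := by
    simp only [Fintype.card_option, Fintype.card_prod, Fintype.card_fin, Fintype.card_bool]
    omega
  have himg : Finset.univ.image f = Finset.Icc 1 (2 * ℓ + 1) := by
    apply Finset.eq_of_subset_of_card_le
    · intro s hs
      simp only [Finset.mem_image] at hs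
      obtain ⟨c, _, rfl⟩ := hs
      simp only [Finset.mem_Icc]
      exact hb c
    · rw [Finset.card_image_of_injective _ hinj, Finset.card_univ, hcard, Nat.card_Icc]
      omega
  have hfilter : (Finset.univ.filter (fun b => f b < f a)).image f
      = (Finset.Icc 1 (2 * ℓ + 1)).filter (fun s => s < f a) := by
    rw [← himg, Finset.filter_image]
  have hcards : (Finset.univ.filter (fun b => f b < f a)).card
      = ((Finset.Icc 1 (2 * ℓ + 1)).filter (fun s => s < f a)).card := by
    rw [← hfilter, Finset.card_image_of_injective _ hinj]
  have h2 : (Finset.Icc 1 (2 * ℓ + 1)).filter (fun s => s < f a)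
      = Finset.Icc 1 (f a - 1) := by
    ext s
    simp only [Finset.mem_filter, Finset.mem_Icc]
    have := hb a
    omega
  rw [hcards, h2, Nat.card_Icc]
  have := hb a
  omega

/-- in the tautology-reduction profile, fix `i` and a candidate
`a ∉ {x_i, ¬x_i}`.  In every completion, across the `m−2` orders given by the completion
of voter `v_i` together with the orders of `v_i¹,…,v_i^{m−3}`, the candidate `a` occupies
each position in `{1,…,m} \ {d, d+1}` exactly once; consequently these `m−2` voters
jointly contribute exactly `ρ = (Σ_{s=1}^{m} r(s)) − r(d) − r(d+1)` to the score of `a`. -/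
theorem vi_voters_other_candidate_positions (ℓ : ℕ) (hℓ : 1 ≤ ℓ) (r : ℕ → ℕ)
    (hr_mono : ∀ p q, 1 ≤ p → p ≤ q → q ≤ 2 * ℓ + 1 → r q ≤ r p)
    (hr_strict : r (2 * ℓ + 1) < r 1)
    (d : ℕ) (hd1 : 1 ≤ d) (hd2 : d ≤ 2 * ℓ) (hrd : r (d + 1) < r d)
    (oth : Fin ℓ → Fin (2 * ℓ - 1) → Cand ℓ)
    (hoth_inj : ∀ i, Function.Injective (oth i))
    (hoth_ne : ∀ i q, oth i q ≠ some (i, true) ∧ oth i q ≠ some (i, false))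
    (Tv : Fin ℓ → Cand ℓ → ℕ) (hTv : IsProfileCompletion oth d Tv)
    (i : Fin ℓ) (a : Cand ℓ)
    (ha1 : a ≠ some (i, true)) (ha2 : a ≠ some (i, false)) :
    (∀ p, 1 ≤ p → p ≤ 2 * ℓ + 1 → p ≠ d → p ≠ d + 1 →
      Multiset.count p
        (Tv i a ::ₘ (Finset.Icc 1 (2 * ℓ - 2)).val.map (fun j => vijPos oth d i j a)) = 1) ∧
    (r (Tv i a) + ∑ j ∈ Finset.Icc 1 (2 * ℓ - 2), r (vijPos oth d i j a)) =
      (∑ s ∈ Finset.Icc 1 (2 * ℓ + 1), r s) - r d - r (d + 1) := by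
  obtain ⟨q0, hq0, hq0idx⟩ := othIdx_spec hℓ oth hoth_inj hoth_ne i a ha1 ha2
  have hQlt : othIdx oth i a < 2 * ℓ - 1 := hq0idx ▸ q0.isLt
  set Q : ℕ := othIdx oth i a with hQdef
  -- the base position function
  set P := viBasePos oth d i with hPdef
  have hPval : ∀ c, c ≠ some (i, true) → c ≠ some (i, false) →
      P c = gfun d (othIdx oth i c) := by
    intro c h1 h2
    simp only [hPdef, viBasePos, if_neg h1, if_neg h2, gfun]
  have hPxt : P (some (i, true)) = d := by simp [hPdef, viBasePos]
  have hPxf : P (some (i, false)) = d + 1 := by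
    simp [hPdef, viBasePos]
  have hidx_inj : ∀ b c : Cand ℓ, b ≠ some (i, true) → b ≠ some (i, false) →
      c ≠ some (i, true) → c ≠ some (i, false) →
      othIdx oth i b = othIdx oth i c → b = c := by
    intro b c hb1 hb2 hc1 hc2 h
    obtain ⟨qb, hqb, hqbi⟩ := othIdx_spec hℓ oth hoth_inj hoth_ne i b hb1 hb2
    obtain ⟨qc, hqc, hqci⟩ := othIdx_spec hℓ oth hoth_inj hoth_ne i c hc1 hc2
    rw [← hqb, ← hqc]
    congr 1
    exact Fin.ext (by omega)
  have hclass : ∀ b : Cand ℓ, (P b = d ∧ b = some (i, true)) ∨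
      (P b = d + 1 ∧ b = some (i, false)) ∨
      (b ≠ some (i, true) ∧ b ≠ some (i, false) ∧ P b = gfun d (othIdx oth i b)) := by
    intro b
    by_cases hb1 : b = some (i, true)
    · exact Or.inl ⟨by rw [hb1, hPxt], hb1⟩
    by_cases hb2 : b = some (i, false)
    · exact Or.inr (Or.inl ⟨by rw [hb2, hPxf], hb2⟩)
    · exact Or.inr (Or.inr ⟨hb1, hb2, hPval b hb1 hb2⟩)
  have hPinj : Function.Injective P := by
    intro b c hbc
    rcases hclass b with ⟨hb, hbe⟩ | ⟨hb, hbe⟩ | ⟨hb1, hb2, hb⟩ <;>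
      rcases hclass c with ⟨hc, hce⟩ | ⟨hc, hce⟩ | ⟨hc1, hc2, hc⟩
    · rw [hbe, hce]
    · omega
    · exact absurd (by omega : gfun d (othIdx oth i c) = d) (gfun_ne d _).1
    · omega
    · rw [hbe, hce]
    · exact absurd (by omega : gfun d (othIdx oth i c) = d + 1) (gfun_ne d _).2
    · exact absurd (by omega : gfun d (othIdx oth i b) = d) (gfun_ne d _).1
    · exact absurd (by omega : gfun d (othIdx oth i b) = d + 1) (gfun_ne d _).2
    · exact hidx_inj b c hb1 hb2 hc1 hc2 (gfun_inj d _ _ (by omega))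
  have hPbound : ∀ c, 1 ≤ P c ∧ P c ≤ 2 * ℓ + 1 := by
    intro c
    rcases hclass c with ⟨hc, _⟩ | ⟨hc, _⟩ | ⟨hc1, hc2, hc⟩
    · omega
    · omega
    · obtain ⟨q, _, hqi⟩ := othIdx_spec hℓ oth hoth_inj hoth_ne i c hc1 hc2
      have hqlt := q.isLt
      unfold gfun at hc
      split_ifs at hc <;> omega
  -- the position of `a` under the completion equals its base position
  obtain ⟨⟨hTinj, hTb⟩, hTmono⟩ := hTv i
  have hTa : Tv i a = P a := by
    have hset : Finset.univ.filter (fun b => Tv i b < Tv i a)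
        = Finset.univ.filter (fun b => P b < P a) := by
      ext b
      simp only [Finset.mem_filter, Finset.mem_univ, true_and]
      constructor
      · intro h
        rcases lt_trichotomy (P b) (P a) with h' | h' | h'
        · exact h'
        · have hba := hPinj h'
          subst hba
          omega
        · have := hTmono a b h' (by rintro ⟨h1, _⟩; exact ha1 h1)
          omega
      · intro h
        exact hTmono b a h (by rintro ⟨_, h2⟩; exact ha2 h2)
    rw [pos_eq_card (Tv i) hTinj hTb a, pos_eq_card P hPinj hPbound a, hset]
  have hTa2 : Tv i a = gfun d Q := by rw [hTa, hPval a ha1 ha2]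
  -- closed form of the cyclic shift
  have hfun_eq : ∀ j, j < 2 * ℓ - 1 →
      (Q + (2 * ℓ - 1) - j) % (2 * ℓ - 1) = if j ≤ Q then Q - j else Q + (2 * ℓ - 1) - j := by
    intro j hj
    split_ifs with h
    · have heq : Q + (2 * ℓ - 1) - j = (Q - j) + (2 * ℓ - 1) := by omega
      rw [heq, Nat.add_mod_right]
      exact Nat.mod_eq_of_lt (by omega)
    · exact Nat.mod_eq_of_lt (by omega)
  have hvij : ∀ j, vijPos oth d i j a
      = gfun d ((Q + (2 * ℓ - 1) - j) % (2 * ℓ - 1)) := by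
    intro j
    simp only [vijPos, if_neg ha1, if_neg ha2, gfun, ← hQdef]
  -- the multiset of positions is the image of `range (2ℓ-1)` under `gfun d`
  have hA : (0 ::ₘ (Finset.Icc 1 (2 * ℓ - 2)).val) = (Finset.range (2 * ℓ - 1)).val := by
    have h0 : (0 : ℕ) ∉ Finset.Icc 1 (2 * ℓ - 2) := by simp
    have hins : Finset.range (2 * ℓ - 1) = insert 0 (Finset.Icc 1 (2 * ℓ - 2)) := by
      ext x
      simp only [Finset.mem_range, Finset.mem_insert, Finset.mem_Icc]
      omega
    rw [hins, Finset.insert_val_of_notMem h0]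
  have hinjOn : ∀ x ∈ Finset.range (2 * ℓ - 1), ∀ y ∈ Finset.range (2 * ℓ - 1),
      (Q + (2 * ℓ - 1) - x) % (2 * ℓ - 1) = (Q + (2 * ℓ - 1) - y) % (2 * ℓ - 1) → x = y := by
    intro x hx y hy h
    simp only [Finset.mem_range] at hx hy
    rw [hfun_eq x hx, hfun_eq y hy] at h
    split_ifs at h <;> omega
  have hB : Multiset.map (fun j => (Q + (2 * ℓ - 1) - j) % (2 * ℓ - 1))
      (Finset.range (2 * ℓ - 1)).val = (Finset.range (2 * ℓ - 1)).val := by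
    have himg : (Finset.range (2 * ℓ - 1)).image
        (fun j => (Q + (2 * ℓ - 1) - j) % (2 * ℓ - 1)) = Finset.range (2 * ℓ - 1) := by
      apply Finset.eq_of_subset_of_card_le
      · intro x hx
        simp only [Finset.mem_image] at hx
        obtain ⟨j, hj, rfl⟩ := hx
        simp only [Finset.mem_range] at hj ⊢
        rw [hfun_eq j hj]
        split_ifs <;> omega
      · rw [Finset.card_image_of_injOn hinjOn]
    have hnd : (Multiset.map (fun j => (Q + (2 * ℓ - 1) - j) % (2 * ℓ - 1))
        (Finset.range (2 * ℓ - 1)).val).Nodup :=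
      Multiset.Nodup.map_on
        (fun x hx y hy h => hinjOn x (Finset.mem_def.mpr hx) y (Finset.mem_def.mpr hy) h)
        (Finset.range (2 * ℓ - 1)).nodup
    calc Multiset.map (fun j => (Q + (2 * ℓ - 1) - j) % (2 * ℓ - 1))
          (Finset.range (2 * ℓ - 1)).val
        = (Multiset.map (fun j => (Q + (2 * ℓ - 1) - j) % (2 * ℓ - 1))
            (Finset.range (2 * ℓ - 1)).val).dedup := (Multiset.dedup_eq_self.mpr hnd).symm
      _ = ((Finset.range (2 * ℓ - 1)).image
            (fun j => (Q + (2 * ℓ - 1) - j) % (2 * ℓ - 1))).val := rfl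
      _ = (Finset.range (2 * ℓ - 1)).val := by rw [himg]
  have key : (Tv i a ::ₘ (Finset.Icc 1 (2 * ℓ - 2)).val.map (fun j => vijPos oth d i j a))
      = (Finset.range (2 * ℓ - 1)).val.map (gfun d) := by
    have h1 : (fun j => vijPos oth d i j a)
        = fun j => gfun d ((Q + (2 * ℓ - 1) - j) % (2 * ℓ - 1)) := funext hvij
    have h0 : Tv i a = gfun d ((Q + (2 * ℓ - 1) - 0) % (2 * ℓ - 1)) := by
      rw [hTa2, hfun_eq 0 (by omega), if_pos (Nat.zero_le Q), Nat.sub_zero]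
    have hcomp : Multiset.map (fun j => gfun d ((Q + (2 * ℓ - 1) - j) % (2 * ℓ - 1)))
        (Finset.range (2 * ℓ - 1)).val
        = Multiset.map (gfun d) (Finset.range (2 * ℓ - 1)).val := by
      conv_rhs => rw [← hB]
      rw [Multiset.map_map]
      rfl
    rw [h1]
    have hstep : Tv i a ::ₘ Multiset.map (fun j => gfun d ((Q + (2 * ℓ - 1) - j) % (2 * ℓ - 1)))
        (Finset.Icc 1 (2 * ℓ - 2)).val
        = Multiset.map (fun j => gfun d ((Q + (2 * ℓ - 1) - j) % (2 * ℓ - 1)))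
          (Finset.range (2 * ℓ - 1)).val := by
      rw [← hA]
      simp only [Multiset.map_cons]
      rw [← h0]
    rw [hstep, hcomp]
  constructor
  -- part 1: counts
  · intro p hp1 hp2 hpd hpd1
    rw [key]
    have hnd : ((Finset.range (2 * ℓ - 1)).val.map (gfun d)).Nodup :=
      Multiset.Nodup.map_on (fun x _ y _ h => gfun_inj d x y h)
        (Finset.range (2 * ℓ - 1)).nodup
    have hmem : p ∈ (Finset.range (2 * ℓ - 1)).val.map (gfun d) := by
      rw [Multiset.mem_map]
      by_cases hcase : p < d
      · refine ⟨p - 1, Finset.mem_def.mp (Finset.mem_range.mpr (by omega)), ?_⟩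
        unfold gfun
        split_ifs <;> omega
      · refine ⟨p - 3, Finset.mem_def.mp (Finset.mem_range.mpr (by omega)), ?_⟩
        unfold gfun
        split_ifs <;> omega
    exact Multiset.count_eq_one_of_mem hnd hmem
  -- part 2: the sum
  · have hsum1 : r (Tv i a) + ∑ j ∈ Finset.Icc 1 (2 * ℓ - 2), r (vijPos oth d i j a)
        = ∑ t ∈ Finset.range (2 * ℓ - 1), r (gfun d t) := by
      have h := congrArg (fun M : Multiset ℕ => (M.map r).sum) key
      simp only [Multiset.map_cons, Multiset.sum_cons, Multiset.map_map] at h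
      exact h
    set E := ((Finset.Icc 1 (2 * ℓ + 1)).erase (d + 1)).erase d with hE
    have hd1mem : d + 1 ∈ Finset.Icc 1 (2 * ℓ + 1) := Finset.mem_Icc.mpr (by omega)
    have hdmem : d ∈ (Finset.Icc 1 (2 * ℓ + 1)).erase (d + 1) :=
      Finset.mem_erase.mpr ⟨by omega, Finset.mem_Icc.mpr (by omega)⟩
    have himg2 : (Finset.range (2 * ℓ - 1)).image (gfun d) = E := by
      apply Finset.eq_of_subset_of_card_le
      · intro x hx
        simp only [Finset.mem_image, Finset.mem_range] at hx
        obtain ⟨t, ht, rfl⟩ := hx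
        have h1 := (gfun_ne d t).1
        have h2 := (gfun_ne d t).2
        rw [hE]
        refine Finset.mem_erase.mpr ⟨h1, Finset.mem_erase.mpr ⟨h2, Finset.mem_Icc.mpr ?_⟩⟩
        unfold gfun at *
        split_ifs at * <;> omega
      · rw [Finset.card_image_of_injOn (fun x _ y _ h => gfun_inj d x y h), hE,
          Finset.card_erase_of_mem hdmem, Finset.card_erase_of_mem hd1mem,
          Finset.card_range, Nat.card_Icc]
        omega
    have hsum2 : ∑ t ∈ Finset.range (2 * ℓ - 1), r (gfun d t) = ∑ s ∈ E, r s := by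
      rw [← himg2, Finset.sum_image (fun x _ y _ h => gfun_inj d x y h)]
    have htot : r (d + 1) + (r d + ∑ s ∈ E, r s) = ∑ s ∈ Finset.Icc 1 (2 * ℓ + 1), r s := by
      rw [hE, Finset.add_sum_erase _ r hdmem, Finset.add_sum_erase _ r hd1mem]
    rw [hsum1, hsum2]
    omega
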